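/- arXiv:2312.11669 — 5 statements merged into one kernel-verified Lean document; each statement's English description precedes it below -/
import Mathlib

section
/- Let S be a finite nonempty state space, γ ∈ ℝ with 0 < γ < 1, and V^P : S → ℝ a fixed permanent value vector. Fix a sequence of samples (s_t, r_t, s'_t) ∈ S × ℝ × S for t ∈ ℕ and a sequence of learning rates α_t ∈ ℝ. Define the TD iterates V^{TD} : ℕ → (S → ℝ) by: V^{TD}_{t+1}(s) = V^{TD}_t(s) + α_t (r_t + γ V^{TD}_t(s'_t) − V^{TD}_t(s_t)) if s = s_t, and V^{TD}_{t+1}(s) = V^{TD}_t(s) otherwise. Define the transient iterates V^T : ℕ → (S → ℝ) by V^T_0 = 0 and: V^T_{t+1}(s) = V^T_t(s) + α_t (r_t + γ (V^P(s'_t) + V^T_t(s'_t)) − (V^P(s_t) + V^T_t(s_t))) if s = s_t, and V^T_{t+1}(s) = V^T_t(s) otherwise. If V^{TD}_0 = V^P, then for every t ∈ ℕ and every s ∈ S, V^P(s) + V^T_t(s) = V^{TD}_t(s). -/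
/-- Theorem 1 (PT-TD equals TD): if TD is initialized at the permanent value
function `VP` and the transient value function is initialized at `0`, and both
algorithms process the same sample stream `(sq t, rq t, sq' t)` with the same
learning rates `α t`, then `VP + V^T_t = V^{TD}_t` for all `t`. -/
theorem pt_td_equals_td {S : Type*} [Fintype S] [Nonempty S] [DecidableEq S]
    (γ : ℝ) (hγ0 : 0 < γ) (hγ1 : γ < 1)
    (VP : S → ℝ) (sq : ℕ → S) (rq : ℕ → ℝ) (sq' : ℕ → S) (α : ℕ → ℝ)
    (VTD VT : ℕ → S → ℝ)
    (hTD : ∀ t s, VTD (t + 1) s =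
      if s = sq t then
        VTD t s + α t * (rq t + γ * VTD t (sq' t) - VTD t (sq t))
      else VTD t s)
    (hT0 : ∀ s, VT 0 s = 0)
    (hT : ∀ t s, VT (t + 1) s =
      if s = sq t then
        VT t s + α t * (rq t + γ * (VP (sq' t) + VT t (sq' t))
          - (VP (sq t) + VT t (sq t)))
      else VT t s)
    (h0 : ∀ s, VTD 0 s = VP s) :
    ∀ t s, VP s + VT t s = VTD t s := by
  intro t
  induction t with
  | zero => intro s; rw [hT0, h0]; ring
  | succ t ih =>
    intro s
    rw [hT, hTD]
    by_cases h : s = sq t <;> simp [h, ← ih] <;> ring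
end

section
/- Let S be a finite nonempty state space, γ ∈ ℝ with 0 < γ < 1, P : S × S → ℝ a row-stochastic matrix (P s s' ≥ 0 for all s, s' and ∑_{s'} P s s' = 1 for each s), r : S → ℝ, and V^P : S → ℝ. Define the transient Bellman operator T : (S → ℝ) → (S → ℝ) by T u = r + γ·(P V^P) − V^P + γ·(P u). Then the vector w* = (I − γP)^{-1} r − V^P satisfies T w* = w*, and it is the unique fixed point of T: any u with T u = u equals w*. -/
/-- Theorem 3: the unique fixed point of the transient Bellman operator
`T u = r + γ (P V^P) − V^P + γ (P u)` is `(I − γP)⁻¹ r − V^P`. -/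
theorem transient_operator_fixed_point {S : Type*} [Fintype S] [Nonempty S]
    [DecidableEq S]
    (γ : ℝ) (hγ0 : 0 < γ) (hγ1 : γ < 1)
    (P : Matrix S S ℝ) (hP : ∀ s s', 0 ≤ P s s')
    (hrow : ∀ s, ∑ s', P s s' = 1)
    (r VP : S → ℝ)
    (T : (S → ℝ) → (S → ℝ))
    (hT : ∀ u s, T u s =
      r s + γ * (P.mulVec VP s) - VP s + γ * (P.mulVec u s)) :
    T ((1 - γ • P)⁻¹.mulVec r - VP) = (1 - γ • P)⁻¹.mulVec r - VP ∧
      ∀ u : S → ℝ, T u = u → u = (1 - γ • P)⁻¹.mulVec r - VP := by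
  set A : Matrix S S ℝ := 1 - γ • P with hA
  have hdet : A.det ≠ 0 := by
    apply det_ne_zero_of_sum_row_lt_diag
    intro k
    have h1 : ∀ j ∈ Finset.univ.erase k, ‖A k j‖ = γ * P k j := by
      intro j hj
      have hjk : j ≠ k := Finset.ne_of_mem_erase hj
      simp only [hA, Matrix.sub_apply, Matrix.one_apply_ne' hjk, Matrix.smul_apply,
        smul_eq_mul, zero_sub, Real.norm_eq_abs, abs_neg]
      rw [abs_of_nonneg (mul_nonneg hγ0.le (hP k j))]
    rw [Finset.sum_congr rfl h1]
    have hsum : ∑ j ∈ Finset.univ.erase k, γ * P k j = γ * (1 - P k k) := by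
      rw [← Finset.mul_sum]
      congr 1
      have := hrow k
      rw [← Finset.add_sum_erase _ _ (Finset.mem_univ k)] at this
      linarith
    rw [hsum]
    have hAkk : A k k = 1 - γ * P k k := by simp [hA]
    have hPkk1 : P k k ≤ 1 := by
      have h := Finset.single_le_sum (fun j (_ : j ∈ Finset.univ) => hP k j)
        (Finset.mem_univ k)
      linarith [hrow k]
    have hpos : 0 < 1 - γ * P k k := by nlinarith [hP k k]
    rw [hAkk, Real.norm_eq_abs, abs_of_pos hpos]
    nlinarith [hP k k]
  have hAAinv : A * A⁻¹ = 1 := Matrix.mul_nonsing_inv A (isUnit_iff_ne_zero.2 hdet)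
  have hAinvA : A⁻¹ * A = 1 := Matrix.nonsing_inv_mul A (isUnit_iff_ne_zero.2 hdet)
  have hAv : ∀ (v : S → ℝ) (s : S), A.mulVec v s = v s - γ * P.mulVec v s := by
    intro v s
    simp [hA, Matrix.sub_mulVec, Matrix.smul_mulVec, Matrix.one_mulVec]
  have hkey : A.mulVec (A⁻¹.mulVec r) = r := by
    rw [Matrix.mulVec_mulVec, hAAinv, Matrix.one_mulVec]
  have hgamma : ∀ s, γ * P.mulVec (A⁻¹.mulVec r) s = A⁻¹.mulVec r s - r s := by
    intro s
    have h1 := congrFun hkey s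
    rw [hAv] at h1
    linarith
  constructor
  · funext s
    rw [hT]
    have hPlin : P.mulVec (A⁻¹.mulVec r - VP) s
        = P.mulVec (A⁻¹.mulVec r) s - P.mulVec VP s := by
      rw [Matrix.mulVec_sub]; rfl
    rw [hPlin]
    have := hgamma s
    simp only [Pi.sub_apply]
    linarith [mul_sub γ (P.mulVec (A⁻¹.mulVec r) s) (P.mulVec VP s)]
  · intro u hu
    have hstep : ∀ s, A.mulVec (u - (A⁻¹.mulVec r - VP)) s = 0 := by
      intro s
      have h1 := congrFun hu s
      rw [hT] at h1
      have h2 := hgamma s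
      have hPlin : P.mulVec (u - (A⁻¹.mulVec r - VP)) s
          = P.mulVec u s - (P.mulVec (A⁻¹.mulVec r) s - P.mulVec VP s) := by
        rw [Matrix.mulVec_sub, Matrix.mulVec_sub]
        simp
      rw [hAv, hPlin]
      simp only [Pi.sub_apply]
      nlinarith
    have h0 : A.mulVec (u - (A⁻¹.mulVec r - VP)) = 0 := funext hstep
    have h2 := congrArg (A⁻¹.mulVec ·) h0
    simp only [Matrix.mulVec_mulVec, hAinvA, Matrix.one_mulVec, Matrix.mulVec_zero] at h2
    exact sub_eq_zero.mp h2
end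

section
/- Let S be a finite nonempty state space, γ ∈ ℝ with 0 < γ < 1, V^P : S → ℝ, s : ℕ → S a sequence of states, and R : ℕ → ℝ a bounded sequence of rewards. Define the modified rewards R̃_k = R_k + γ V^P(s_{k+1}) − V^P(s_k). Then the series ∑_{k=0}^∞ γ^k R̃_k converges, the series ∑_{k=0}^∞ γ^k R_k converges, and ∑_{k=0}^∞ γ^k R̃_k = (∑_{k=0}^∞ γ^k R_k) − V^P(s_0). -/
lemma summable_geom_mul_bounded (γ : ℝ) (hγ0 : 0 < γ) (hγ1 : γ < 1)
    (g : ℕ → ℝ) (C : ℝ) (hg : ∀ k, |g k| ≤ C) :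
    Summable (fun k : ℕ => γ ^ k * g k) := by
  apply Summable.of_abs
  apply Summable.of_nonneg_of_le (fun k => abs_nonneg _) (fun k => ?_)
    ((summable_geometric_of_lt_one hγ0.le hγ1).mul_right C)
  rw [abs_mul, abs_pow, abs_of_pos hγ0]
  exact mul_le_mul_of_nonneg_left (hg k) (pow_nonneg hγ0.le k)

/-- Telescoping identity in the proof of Theorem 4: along a trajectory with
bounded rewards, the discounted return of the modified rewards
`R̃_k = R_k + γ V^P(s_{k+1}) − V^P(s_k)` equals the discounted return of the
original rewards minus `V^P(s_0)`, and both series converge. -/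
theorem modified_return_telescopes {S : Type*} [Fintype S] [Nonempty S]
    (γ : ℝ) (hγ0 : 0 < γ) (hγ1 : γ < 1)
    (VP : S → ℝ) (s : ℕ → S) (R : ℕ → ℝ)
    (hR : ∃ M : ℝ, ∀ k, |R k| ≤ M) :
    Summable (fun k : ℕ => γ ^ k * (R k + γ * VP (s (k + 1)) - VP (s k))) ∧
    Summable (fun k : ℕ => γ ^ k * R k) ∧
    ∑' k : ℕ, γ ^ k * (R k + γ * VP (s (k + 1)) - VP (s k)) =
      (∑' k : ℕ, γ ^ k * R k) - VP (s 0) := by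
  obtain ⟨M, hM⟩ := hR
  obtain ⟨C, hC⟩ := Finite.exists_le (fun x : S => |VP x|)
  have hRsum : Summable (fun k : ℕ => γ ^ k * R k) :=
    summable_geom_mul_bounded γ hγ0 hγ1 R M hM
  set f : ℕ → ℝ := fun k => γ ^ k * VP (s k) with hf
  have hfsum : Summable f :=
    summable_geom_mul_bounded γ hγ0 hγ1 (fun k => VP (s k)) C (fun k => hC (s k))
  have hfsum1 : Summable (fun k => f (k + 1)) := (summable_nat_add_iff 1).2 hfsum
  have key : ∀ k : ℕ, γ ^ k * (R k + γ * VP (s (k + 1)) - VP (s k)) =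
      γ ^ k * R k + (f (k + 1) - f k) := by
    intro k
    simp only [hf, pow_succ]
    ring
  have hmain : Summable (fun k : ℕ => γ ^ k * (R k + γ * VP (s (k + 1)) - VP (s k))) := by
    simp only [key]
    exact hRsum.add (hfsum1.sub hfsum)
  refine ⟨hmain, hRsum, ?_⟩
  have h1 : ∑' k : ℕ, γ ^ k * (R k + γ * VP (s (k + 1)) - VP (s k)) =
      (∑' k : ℕ, γ ^ k * R k) + ∑' k : ℕ, (f (k + 1) - f k) := by
    simp only [key]
    rw [Summable.tsum_add hRsum (hfsum1.sub hfsum)]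
  rw [h1, Summable.tsum_sub hfsum1 hfsum, Summable.tsum_eq_zero_add hfsum]
  have : f 0 = VP (s 0) := by simp [hf]
  rw [this]
  ring
end

section
/- Let S be a finite nonempty state space, T a finite nonempty index set of tasks, v : T → (S → ℝ), p : T → ℝ a probability vector (p_τ ≥ 0, ∑_τ p_τ = 1), and m = ∑_τ p_τ • v_τ. Let C ∈ ℝ with 0 < C < 1. Fix a task i ∈ T, and assume there exists τ ∈ T with p_τ > 0 and v_τ ≠ m. For each task τ, let V^{(τ)} : ℕ → (S → ℝ) be a sequence with V^{(τ)}_0 = v_i and ‖V^{(τ)}_{k+1} − v_τ‖₂² ≤ C · ‖V^{(τ)}_k − v_τ‖₂² for all k. Then there exists k₀ ∈ ℕ such that for all k ≥ k₀, ∑_τ p_τ ‖V^{(τ)}_k − v_i‖₂² > ‖m − v_i‖₂². -/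
/-- Theorem 7 (forgetting): suppose at a task switch the TD estimate equals
the old task's value function `v i`, and afterwards, on task `τ` (drawn with
probability `p τ`), the squared error of the TD iterates to `v τ` contracts by
a factor `C < 1` per step. If the task distribution puts positive mass on a
task whose value function differs from the mean `m = E_τ[v_τ]`, then after
finitely many steps the expected squared distance of the TD estimate from
`v i` exceeds that of the permanent value function `m`. -/
theorem td_forgets_past_task {S : Type*} [Fintype S] [Nonempty S]
    {T : Type*} [Fintype T] [Nonempty T]
    (v : T → S → ℝ) (p : T → ℝ)
    (hp : ∀ τ, 0 ≤ p τ) (hpsum : ∑ τ, p τ = 1)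
    (m : S → ℝ) (hm : m = ∑ τ, p τ • v τ)
    (C : ℝ) (hC0 : 0 < C) (hC1 : C < 1)
    (i : T)
    (hne : ∃ τ, 0 < p τ ∧ v τ ≠ m)
    (V : T → ℕ → S → ℝ)
    (hV0 : ∀ τ, V τ 0 = v i)
    (hVcon : ∀ τ k,
      ∑ s, (V τ (k + 1) s - v τ s) ^ 2 ≤ C * ∑ s, (V τ k s - v τ s) ^ 2) :
    ∃ k₀ : ℕ, ∀ k ≥ k₀,
      ∑ s, (m s - v i s) ^ 2 < ∑ τ, p τ * ∑ s, (V τ k s - v i s) ^ 2 := by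
  classical
  -- squared distances between value functions
  set d : T → ℝ := fun τ => ∑ s, (v i s - v τ s) ^ 2 with hd
  have hd0 : ∀ τ, 0 ≤ d τ := fun τ => Finset.sum_nonneg fun s _ => sq_nonneg _
  set D : T → ℝ := fun τ => Real.sqrt (d τ) with hD
  have hD0 : ∀ τ, 0 ≤ D τ := fun τ => Real.sqrt_nonneg _
  have hDsq : ∀ τ, D τ * D τ = d τ := fun τ => Real.mul_self_sqrt (hd0 τ)
  -- m evaluated pointwise
  have hms : ∀ s, m s = ∑ τ, p τ * v τ s := by
    intro s
    rw [hm]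
    simp [Finset.sum_apply]
  -- TD error contracts: f τ k ≤ C^k * d τ
  have hf : ∀ τ k, ∑ s, (V τ k s - v τ s) ^ 2 ≤ C ^ k * d τ := by
    intro τ k
    induction k with
    | zero =>
      have : ∀ s, (V τ 0 s - v τ s) ^ 2 = (v i s - v τ s) ^ 2 := by
        intro s; rw [hV0]
      simp only [this, pow_zero, one_mul]
      exact le_of_eq rfl
    | succ k ih =>
      calc ∑ s, (V τ (k + 1) s - v τ s) ^ 2
          ≤ C * ∑ s, (V τ k s - v τ s) ^ 2 := hVcon τ k
        _ ≤ C * (C ^ k * d τ) := mul_le_mul_of_nonneg_left ih hC0.le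
        _ = C ^ (k + 1) * d τ := by ring
  have hfnn : ∀ τ k, (0:ℝ) ≤ ∑ s, (V τ k s - v τ s) ^ 2 :=
    fun τ k => Finset.sum_nonneg fun s _ => sq_nonneg _
  -- key lower bound via Cauchy-Schwarz
  have hkey : ∀ τ k,
      d τ - 2 * D τ * Real.sqrt (∑ s, (V τ k s - v τ s) ^ 2)
        ≤ ∑ s, (V τ k s - v i s) ^ 2 := by
    intro τ k
    set a : S → ℝ := fun s => V τ k s - v τ s with ha
    set b : S → ℝ := fun s => v τ s - v i s with hb
    have hsum : ∑ s, (V τ k s - v i s) ^ 2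
        = ∑ s, a s ^ 2 + 2 * ∑ s, a s * b s + ∑ s, b s ^ 2 := by
      rw [Finset.mul_sum, ← Finset.sum_add_distrib, ← Finset.sum_add_distrib]
      apply Finset.sum_congr rfl
      intro s _
      simp only [ha, hb]
      ring
    have hbd : ∑ s, b s ^ 2 = d τ := by
      apply Finset.sum_congr rfl
      intro s _
      simp only [hb, hd]
      ring
    have hcs : ∑ s, (-a s) * b s
        ≤ Real.sqrt (∑ s, (-a s) ^ 2) * Real.sqrt (∑ s, b s ^ 2) :=
      Real.sum_mul_le_sqrt_mul_sqrt _ _ _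
    have h1 : ∑ s, (-a s) * b s = -(∑ s, a s * b s) := by
      rw [← Finset.sum_neg_distrib]
      apply Finset.sum_congr rfl
      intro s _; ring
    have h2 : ∑ s, (-a s) ^ 2 = ∑ s, a s ^ 2 := by
      apply Finset.sum_congr rfl
      intro s _; ring
    rw [h1, h2, hbd] at hcs
    have hann : (0:ℝ) ≤ ∑ s, a s ^ 2 := Finset.sum_nonneg fun s _ => sq_nonneg _
    have hsa : Real.sqrt (∑ s, a s ^ 2) = Real.sqrt (∑ s, (V τ k s - v τ s) ^ 2) := rfl
    rw [hsum, hbd]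
    nlinarith [hcs, hann]
  -- bias-variance decomposition
  have hps : ∀ s, ∑ τ, p τ * (v i s - v τ s) ^ 2
      = (m s - v i s) ^ 2 + ∑ τ, p τ * (v τ s - m s) ^ 2 := by
    intro s
    have h1 : ∑ τ, p τ * v τ s = m s := (hms s).symm
    calc ∑ τ, p τ * (v i s - v τ s) ^ 2
        = ∑ τ, (p τ * (v τ s - m s) ^ 2 + p τ * (v i s ^ 2 - m s ^ 2)
            + p τ * v τ s * (2 * (m s - v i s))) := by
          apply Finset.sum_congr rfl
          intro τ _
          ring
      _ = ∑ τ, p τ * (v τ s - m s) ^ 2 + (∑ τ, p τ) * (v i s ^ 2 - m s ^ 2)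
            + (∑ τ, p τ * v τ s) * (2 * (m s - v i s)) := by
          rw [Finset.sum_add_distrib, Finset.sum_add_distrib, ← Finset.sum_mul,
            ← Finset.sum_mul]
      _ = (m s - v i s) ^ 2 + ∑ τ, p τ * (v τ s - m s) ^ 2 := by
          rw [hpsum, h1]; ring
  have hbv : ∑ τ, p τ * d τ
      = ∑ s, (m s - v i s) ^ 2 + ∑ τ, p τ * ∑ s, (v τ s - m s) ^ 2 := by
    calc ∑ τ, p τ * d τ = ∑ s, ∑ τ, p τ * (v i s - v τ s) ^ 2 := by
          simp_rw [hd, Finset.mul_sum]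
          rw [Finset.sum_comm]
      _ = ∑ s, ((m s - v i s) ^ 2 + ∑ τ, p τ * (v τ s - m s) ^ 2) :=
          Finset.sum_congr rfl fun s _ => hps s
      _ = ∑ s, (m s - v i s) ^ 2 + ∑ τ, p τ * ∑ s, (v τ s - m s) ^ 2 := by
          rw [Finset.sum_add_distrib]
          congr 1
          simp_rw [Finset.mul_sum]
          rw [Finset.sum_comm]
  -- the variance term is positive
  set ε : ℝ := ∑ τ, p τ * ∑ s, (v τ s - m s) ^ 2 with hε
  have hεpos : 0 < ε := by
    obtain ⟨τ₀, hpτ₀, hvτ₀⟩ := hne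
    obtain ⟨s₀, hs₀⟩ := Function.ne_iff.mp hvτ₀
    have hpos : 0 < ∑ s, (v τ₀ s - m s) ^ 2 := by
      apply Finset.sum_pos' (fun s _ => sq_nonneg _)
      refine ⟨s₀, Finset.mem_univ _, ?_⟩
      exact lt_of_le_of_ne (sq_nonneg _)
        (Ne.symm (pow_ne_zero 2 (sub_ne_zero.mpr hs₀)))
    have hle : p τ₀ * ∑ s, (v τ₀ s - m s) ^ 2 ≤ ε :=
      Finset.single_le_sum
        (f := fun τ => p τ * ∑ s, (v τ s - m s) ^ 2)
        (fun τ _ => mul_nonneg (hp τ) (Finset.sum_nonneg fun s _ => sq_nonneg _))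
        (Finset.mem_univ τ₀)
    exact lt_of_lt_of_le (mul_pos hpτ₀ hpos) hle
  -- geometric decay of the cross term
  set r : ℝ := Real.sqrt C with hr
  have hr0 : 0 ≤ r := Real.sqrt_nonneg _
  have hr1 : r < 1 := by
    rw [hr, show (1:ℝ) = Real.sqrt 1 by simp]
    exact Real.sqrt_lt_sqrt hC0.le hC1
  have hsqrtCk : ∀ k : ℕ, Real.sqrt (C ^ k) = r ^ k := by
    intro k
    rw [hr, ← Real.sqrt_sq (pow_nonneg (Real.sqrt_nonneg C) k)]
    congr 1
    rw [← pow_mul, mul_comm k 2, pow_mul, Real.sq_sqrt hC0.le]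
  set B : ℝ := ∑ τ, p τ * (2 * D τ * D τ) with hB
  have htend : Filter.Tendsto (fun k : ℕ => r ^ k * B) Filter.atTop (nhds 0) := by
    simpa using (tendsto_pow_atTop_nhds_zero_of_lt_one hr0 hr1).mul_const B
  have hev := htend.eventually (gt_mem_nhds hεpos)
  rw [Filter.eventually_atTop] at hev
  obtain ⟨k₀, hk₀⟩ := hev
  refine ⟨k₀, fun k hk => ?_⟩
  have hklt : r ^ k * B < ε := hk₀ k hk
  -- lower bound the expected squared error
  have hstep : ∀ τ : T, p τ * (d τ - 2 * D τ * (r ^ k * D τ))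
      ≤ p τ * ∑ s, (V τ k s - v i s) ^ 2 := by
    intro τ
    apply mul_le_mul_of_nonneg_left _ (hp τ)
    refine le_trans ?_ (hkey τ k)
    have hsq : Real.sqrt (∑ s, (V τ k s - v τ s) ^ 2) ≤ r ^ k * D τ := by
      calc Real.sqrt (∑ s, (V τ k s - v τ s) ^ 2)
          ≤ Real.sqrt (C ^ k * d τ) := Real.sqrt_le_sqrt (hf τ k)
        _ = r ^ k * D τ := by
            rw [Real.sqrt_mul (pow_nonneg hC0.le k), hsqrtCk k]
    have : 2 * D τ * Real.sqrt (∑ s, (V τ k s - v τ s) ^ 2)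
        ≤ 2 * D τ * (r ^ k * D τ) :=
      mul_le_mul_of_nonneg_left hsq (by positivity)
    linarith
  have hsum_lb : ∑ τ, p τ * (d τ - 2 * D τ * (r ^ k * D τ))
      ≤ ∑ τ, p τ * ∑ s, (V τ k s - v i s) ^ 2 :=
    Finset.sum_le_sum fun τ _ => hstep τ
  have hsplit : ∑ τ, p τ * (d τ - 2 * D τ * (r ^ k * D τ))
      = ∑ τ, p τ * d τ - r ^ k * B := by
    rw [hB, Finset.mul_sum, ← Finset.sum_sub_distrib]
    apply Finset.sum_congr rfl
    intro τ _
    ring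
  have := hbv
  rw [hsplit] at hsum_lb
  linarith
end

section
/- Let (Ω, ℱ, ℙ) be a probability space, S a finite nonempty state space, γ ∈ ℝ with 0 < γ < 1, α ∈ ℝ, and N a positive natural number. Let d : S → ℝ, r̄ : S → ℝ, and P : S × S → ℝ. Let V_t : Ω → (S → ℝ) be a random vector with each coordinate integrable. For each k ∈ {1, …, N}, let S_k : Ω → S, R_k : Ω → ℝ (integrable, with R_k · 1_{S_k = s} integrable for each s), and S'_k : Ω → S be random variables such that: (i) the triple (S_k, R_k, S'_k) is independent of V_t; (ii) 𝔼[1_{S_k = s}] = d(s) for every s; (iii) 𝔼[1_{S_k = s} · R_k] = d(s) · r̄(s) for every s; (iv) 𝔼[1_{S_k = s} · 1_{S'_k = x}] = d(s) · P s x for every s, x. Define the random vector V_{t+1} : Ω → (S → ℝ) by V_{t+1}(ω)(s) = V_t(ω)(s) + α ∑_{k=1}^{N} 1_{S_k(ω) = s} · (R_k(ω) + γ V_t(ω)(S'_k(ω)) − V_t(ω)(s)). Then for every s ∈ S, 𝔼[V_{t+1}(·)(s)] = 𝔼[V_t(·)(s)] + α N d(s) · ( r̄(s) + γ ∑_{x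 ∈ S} P s x · 𝔼[V_t(·)(x)] − 𝔼[V_t(·)(s)] ). -/
open MeasureTheory ProbabilityTheory

/-!
Write `δ = R + γ V(S') − V(s)` for the TD error of one sample. Expanding `V(S')` as
`∑ₓ 1_{S'=x} V(x)` makes `1_{S=s} δ` a linear combination of products `φ(S, R, S') · V(x)`, and
independence of the sample from `V` factors the mean of each product as `𝔼[φ(S, R, S')] 𝔼[V(x)]`.
The moment conditions then evaluate the mean of every sample's contribution to
`d(s) (r̄(s) + γ (P m)(s) − m(s))` with `m = 𝔼[V]`, and the `N` contributions add up.
-/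

section

variable {S : Type*} [DecidableEq S]

lemma ite_mul_tdError_eq [Fintype S] (γ r : ℝ) (v : S → ℝ) (y y' s : S) :
    (if y = s then (1 : ℝ) else 0) * (r + γ * v y' - v s) =
      (if y = s then (1 : ℝ) else 0) * r +
        γ * ∑ x, (if y = s then (1 : ℝ) else 0) * ((if y' = x then (1 : ℝ) else 0) * v x) -
        (if y = s then (1 : ℝ) else 0) * v s := by
  have hv : v y' = ∑ x, (if y' = x then (1 : ℝ) else 0) * v x := by
    simp only [ite_mul, one_mul, zero_mul, Fintype.sum_ite_eq]
  rw [← Finset.mul_sum, ← hv]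
  ring

lemma measurable_ite_eq_one_zero [MeasurableSpace S] [MeasurableSingletonClass S] {α : Type*}
    [MeasurableSpace α] {X : α → S} (hX : Measurable X) (s : S) :
    Measurable fun a => if X a = s then (1 : ℝ) else 0 :=
  Measurable.ite (hX (measurableSet_singleton s)) measurable_const measurable_const

end

section

variable {Ω : Type*} [MeasurableSpace Ω] {μ : Measure Ω}

lemma MeasureTheory.Integrable.ite_one_zero_mul {p : Ω → Prop} [DecidablePred p]
    (hp : MeasurableSet {ω | p ω}) {f : Ω → ℝ} (hf : Integrable f μ) :
    Integrable (fun ω => (if p ω then (1 : ℝ) else 0) * f ω) μ := by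
  refine hf.bdd_mul (c := 1) ?_ (.of_forall fun ω => ?_)
  · exact (Measurable.ite hp measurable_const measurable_const).aestronglyMeasurable
  · split_ifs <;> simp

lemma ProbabilityTheory.IndepFun.integral_comp_mul_apply {β ι : Type*} [MeasurableSpace β]
    {Z : Ω → β} {V : Ω → ι → ℝ} (hZV : IndepFun Z V μ) {φ : β → ℝ} (hφ : Measurable φ)
    (hφZ : AEStronglyMeasurable (fun ω => φ (Z ω)) μ) (i : ι)
    (hV : AEStronglyMeasurable (fun ω => V ω i) μ) :
    ∫ ω, φ (Z ω) * V ω i ∂μ = (∫ ω, φ (Z ω) ∂μ) * ∫ ω, V ω i ∂μ :=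
  (hZV.comp hφ (measurable_pi_apply i)).integral_fun_mul_eq_mul_integral hφZ hV

variable {S : Type*} [Fintype S] [DecidableEq S] [MeasurableSpace S] [MeasurableSingletonClass S]
  {X X' : Ω → S} {R : Ω → ℝ} {V : Ω → S → ℝ}

lemma integrable_ite_mul_tdError (γ : ℝ) (hX : Measurable X) (hX' : Measurable X')
    (hV : ∀ x, Integrable (fun ω => V ω x) μ) (s : S)
    (hR : Integrable (fun ω => (if X ω = s then (1 : ℝ) else 0) * R ω) μ) :
    Integrable (fun ω => (if X ω = s then (1 : ℝ) else 0) *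
      (R ω + γ * V ω (X' ω) - V ω s)) μ := by
  have hXs : MeasurableSet {ω | X ω = s} := hX (measurableSet_singleton s)
  simp_rw [ite_mul_tdError_eq]
  refine (hR.add (Integrable.const_mul (integrable_finsetSum _ fun x _ => ?_) γ)).sub
    ((hV s).ite_one_zero_mul hXs)
  exact ((hV x).ite_one_zero_mul (hX' (measurableSet_singleton x))).ite_one_zero_mul hXs

lemma integral_ite_mul_tdError (γ : ℝ) (hX : Measurable X) (hX' : Measurable X')
    (hV : ∀ x, Integrable (fun ω => V ω x) μ) (s : S)
    (hR : Integrable (fun ω => (if X ω = s then (1 : ℝ) else 0) * R ω) μ)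
    (hind : IndepFun (fun ω => (X ω, R ω, X' ω)) V μ) :
    ∫ ω, (if X ω = s then (1 : ℝ) else 0) * (R ω + γ * V ω (X' ω) - V ω s) ∂μ =
      (∫ ω, (if X ω = s then (1 : ℝ) else 0) * R ω ∂μ) +
        γ * ∑ x, (∫ ω, (if X ω = s then (1 : ℝ) else 0) *
          (if X' ω = x then (1 : ℝ) else 0) ∂μ) * ∫ ω, V ω x ∂μ -
        (∫ ω, (if X ω = s then (1 : ℝ) else 0) ∂μ) * ∫ ω, V ω s ∂μ := by
  have hXs : MeasurableSet {ω | X ω = s} := hX (measurableSet_singleton s)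
  have hmeas_s := measurable_ite_eq_one_zero hX s
  have hpair (x : S) :
      ∫ ω, (if X ω = s then (1 : ℝ) else 0) * ((if X' ω = x then (1 : ℝ) else 0) * V ω x) ∂μ =
        (∫ ω, (if X ω = s then (1 : ℝ) else 0) * (if X' ω = x then (1 : ℝ) else 0) ∂μ) *
          ∫ ω, V ω x ∂μ := by
    simp_rw [← mul_assoc]
    exact hind.integral_comp_mul_apply
      ((measurable_ite_eq_one_zero measurable_fst s).mul
        (measurable_ite_eq_one_zero measurable_snd.snd x))
      (hmeas_s.mul (measurable_ite_eq_one_zero hX' x)).aestronglyMeasurable x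
      (hV x).aestronglyMeasurable
  have hself : ∫ ω, (if X ω = s then (1 : ℝ) else 0) * V ω s ∂μ =
      (∫ ω, (if X ω = s then (1 : ℝ) else 0) ∂μ) * ∫ ω, V ω s ∂μ :=
    hind.integral_comp_mul_apply (measurable_ite_eq_one_zero measurable_fst s)
      hmeas_s.aestronglyMeasurable s (hV s).aestronglyMeasurable
  have hpair_int (x : S) : Integrable (fun ω => (if X ω = s then (1 : ℝ) else 0) *
      ((if X' ω = x then (1 : ℝ) else 0) * V ω x)) μ :=
    ((hV x).ite_one_zero_mul (hX' (measurableSet_singleton x))).ite_one_zero_mul hXs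
  have hsum_int := (integrable_finsetSum Finset.univ fun x _ => hpair_int x).const_mul γ
  simp_rw [ite_mul_tdError_eq]
  rw [integral_sub (by exact hR.add hsum_int) ((hV s).ite_one_zero_mul hXs),
    integral_add hR hsum_int, integral_const_mul,
    integral_finsetSum _ fun x _ => hpair_int x, hself]
  simp_rw [hpair]

end

theorem td_mean_evolution_general
    {Ω : Type*} [MeasurableSpace Ω] (μ : Measure Ω)
    {S : Type*} [Fintype S] [DecidableEq S]
    [MeasurableSpace S] [MeasurableSingletonClass S]
    (γ α : ℝ)
    (N : ℕ)
    (d rbar : S → ℝ) (P : S → S → ℝ)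
    (Vt : Ω → S → ℝ)
    (hVt_int : ∀ s, Integrable (fun ω => Vt ω s) μ)
    (Sk : Fin N → Ω → S) (Rk : Fin N → Ω → ℝ) (Sk' : Fin N → Ω → S)
    (hSk_meas : ∀ k, Measurable (Sk k))
    (hSk'_meas : ∀ k, Measurable (Sk' k))
    (hInd_int : ∀ k, ∀ s : S,
      Integrable (fun ω => (if Sk k ω = s then (1 : ℝ) else 0) * Rk k ω) μ)
    (hindep : ∀ k,
      IndepFun (fun ω => (Sk k ω, Rk k ω, Sk' k ω)) Vt μ)
    (hd : ∀ k, ∀ s : S,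
      ∫ ω, (if Sk k ω = s then (1 : ℝ) else 0) ∂μ = d s)
    (hr : ∀ k, ∀ s : S,
      ∫ ω, (if Sk k ω = s then (1 : ℝ) else 0) * Rk k ω ∂μ = d s * rbar s)
    (hP : ∀ k, ∀ s x : S,
      ∫ ω, (if Sk k ω = s then (1 : ℝ) else 0) *
        (if Sk' k ω = x then (1 : ℝ) else 0) ∂μ = d s * P s x)
    (Vt1 : Ω → S → ℝ)
    (hVt1 : ∀ ω s, Vt1 ω s =
      Vt ω s + α * ∑ k : Fin N,
        (if Sk k ω = s then (1 : ℝ) else 0) *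
          (Rk k ω + γ * Vt ω (Sk' k ω) - Vt ω s)) :
    ∀ s : S,
      ∫ ω, Vt1 ω s ∂μ =
        (∫ ω, Vt ω s ∂μ) +
          α * N * d s *
            (rbar s + γ * (∑ x, P s x * ∫ ω, Vt ω x ∂μ) - ∫ ω, Vt ω s ∂μ) := by
  intro s
  have hsample_int (k : Fin N) :=
    integrable_ite_mul_tdError γ (hSk_meas k) (hSk'_meas k) hVt_int s (hInd_int k s)
  have hsample (k : Fin N) :
      ∫ ω, (if Sk k ω = s then (1 : ℝ) else 0) * (Rk k ω + γ * Vt ω (Sk' k ω) - Vt ω s) ∂μ =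
        d s * (rbar s + γ * (∑ x, P s x * ∫ ω, Vt ω x ∂μ) - ∫ ω, Vt ω s ∂μ) := by
    rw [integral_ite_mul_tdError γ (hSk_meas k) (hSk'_meas k) hVt_int s (hInd_int k s)
      (hindep k), hr, hd]
    simp_rw [hP, mul_assoc, ← Finset.mul_sum]
    ring
  calc ∫ ω, Vt1 ω s ∂μ
      = ∫ ω, Vt ω s + α * ∑ k : Fin N, (if Sk k ω = s then (1 : ℝ) else 0) *
          (Rk k ω + γ * Vt ω (Sk' k ω) - Vt ω s) ∂μ := by simp_rw [hVt1]
    _ = (∫ ω, Vt ω s ∂μ) + α * ∑ k : Fin N, ∫ ω, (if Sk k ω = s then (1 : ℝ) else 0) *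
          (Rk k ω + γ * Vt ω (Sk' k ω) - Vt ω s) ∂μ := by
      rw [integral_add (hVt_int s)
          ((integrable_finsetSum _ fun k _ => hsample_int k).const_mul α), integral_const_mul,
        integral_finsetSum _ fun k _ => hsample_int k]
    _ = _ := by
      simp only [hsample, Finset.sum_const, Finset.card_univ, Fintype.card_fin, nsmul_eq_mul]
      ring

/-- Mean-evolution equation of the analytical MSE theorem for batched tabular
TD learning: with `N` i.i.d. transition samples `(S_k, R_k, S'_k)` per round,
independent of the current estimate `V_t`, whose marginals satisfy
`𝔼[1_{S_k=s}] = d(s)`, `𝔼[1_{S_k=s} R_k] = d(s) r̄(s)` and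
`𝔼[1_{S_k=s} 1_{S'_k=x}] = d(s) P s x`, the batched TD update
`V_{t+1}(s) = V_t(s) + α ∑_k 1_{S_k=s}(R_k + γ V_t(S'_k) − V_t(s))`
satisfies, in the mean,
`𝔼[V_{t+1}(s)] = 𝔼[V_t(s)] + α N d(s)(r̄(s) + γ (P 𝔼[V_t])(s) − 𝔼[V_t(s)])`. -/
theorem td_mean_evolution
    {Ω : Type*} [MeasurableSpace Ω] (μ : Measure Ω) [IsProbabilityMeasure μ]
    {S : Type*} [Fintype S] [Nonempty S] [DecidableEq S]
    [MeasurableSpace S] [MeasurableSingletonClass S]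
    (γ α : ℝ) (hγ0 : 0 < γ) (hγ1 : γ < 1)
    (N : ℕ) (hN : 0 < N)
    (d rbar : S → ℝ) (P : S → S → ℝ)
    (Vt : Ω → S → ℝ)
    (hVt_meas : Measurable Vt)
    (hVt_int : ∀ s, Integrable (fun ω => Vt ω s) μ)
    (Sk : Fin N → Ω → S) (Rk : Fin N → Ω → ℝ) (Sk' : Fin N → Ω → S)
    (hSk_meas : ∀ k, Measurable (Sk k))
    (hRk_meas : ∀ k, Measurable (Rk k))
    (hSk'_meas : ∀ k, Measurable (Sk' k))
    (hRk_int : ∀ k, Integrable (Rk k) μ)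
    (hInd_int : ∀ k, ∀ s : S,
      Integrable (fun ω => (if Sk k ω = s then (1 : ℝ) else 0) * Rk k ω) μ)
    (hindep : ∀ k,
      IndepFun (fun ω => (Sk k ω, Rk k ω, Sk' k ω)) Vt μ)
    (hd : ∀ k, ∀ s : S,
      ∫ ω, (if Sk k ω = s then (1 : ℝ) else 0) ∂μ = d s)
    (hr : ∀ k, ∀ s : S,
      ∫ ω, (if Sk k ω = s then (1 : ℝ) else 0) * Rk k ω ∂μ = d s * rbar s)
    (hP : ∀ k, ∀ s x : S,
      ∫ ω, (if Sk k ω = s then (1 : ℝ) else 0) *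
        (if Sk' k ω = x then (1 : ℝ) else 0) ∂μ = d s * P s x)
    (Vt1 : Ω → S → ℝ)
    (hVt1 : ∀ ω s, Vt1 ω s =
      Vt ω s + α * ∑ k : Fin N,
        (if Sk k ω = s then (1 : ℝ) else 0) *
          (Rk k ω + γ * Vt ω (Sk' k ω) - Vt ω s)) :
    ∀ s : S,
      ∫ ω, Vt1 ω s ∂μ =
        (∫ ω, Vt ω s ∂μ) +
          α * N * d s *
            (rbar s + γ * (∑ x, P s x * ∫ ω, Vt ω x ∂μ) - ∫ ω, Vt ω s ∂μ) :=
  td_mean_evolution_general μ γ α N d rbar P Vt hVt_int Sk Rk Sk' hSk_meas hSk'_meas hInd_int hindep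
    hd hr hP Vt1 hVt1
end
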